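/- arXiv:2604.21853 — 4 statements merged into one kernel-verified Lean document; each statement's English description precedes it below -/
import Mathlib

section
/- (Theorem 1, general collapse function) Suppose c_h > c_a, b > 2c_h, and a: [0,1] → ℝ satisfies b − a(x*) = 2(c_h − c_a) at some x* ∈ (0,1). Then the social welfare S = b − c_h + (a(x*) − b + c_h − c_a)·x* at the mixed H–AI state equals b − c_h − x*(c_h − c_a), which is strictly less than b − c_h, the welfare of the all-H baseline. Equivalently ΔS = −x*(c_h − c_a) < 0. -/
/-- Theorem 1, general collapse function: if c_h > c_a,
b > 2c_h, and b − a(x*) = 2(c_h − c_a) at some x* ∈ (0,1), then the social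
welfare S = b − c_h + (a(x*) − b + c_h − c_a)·x* at the mixed H–AI state
equals b − c_h − x*(c_h − c_a) < b − c_h; equivalently
ΔS = −x*(c_h − c_a) < 0. -/
theorem theorem1_welfare_loss (b ca ch : ℝ) (a : ℝ → ℝ) (xs : ℝ)
    (hc : ch > ca) (hb : b > 2 * ch)
    (hx0 : 0 < xs) (hx1 : xs < 1)
    (heq : b - a xs = 2 * (ch - ca))
    (S : ℝ) (hS : S = b - ch + (a xs - b + ch - ca) * xs) :
    S = b - ch - xs * (ch - ca) ∧ S < b - ch ∧
      S - (b - ch) = -xs * (ch - ca) ∧ S - (b - ch) < 0 := by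
  have ha : a xs = b - 2*(ch-ca) := by linarith
  have h1 : S = b - ch - xs * (ch - ca) := by rw [hS, ha]; ring
  refine ⟨h1, ?_, by rw [h1]; ring, ?_⟩ <;> nlinarith [mul_pos hx0 (sub_pos.2 hc)]
end

section
/- The social welfare at the mixed N–AI equilibrium (x_H=0, x_AI=(b−2c_a)/m) of the collaboration game with a(x_AI)=b−m·x_AI equals (b−2c_a)·c_a/m, which is strictly positive whenever b > 2c_a and m > 0. Hence for low-incentive tasks (baseline welfare 0), the welfare gain from introducing AI is ΔS = (b−2c_a)c_a/m > 0. -/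
/-- The social welfare at the mixed N–AI equilibrium
(x_H=0, x_AI=(b−2c_a)/m) with a(x_AI)=b−m·x_AI equals (b−2c_a)·c_a/m,
strictly positive when b > 2c_a and m > 0; hence for low-incentive tasks
(baseline welfare 0) ΔS = (b−2c_a)c_a/m > 0. -/
theorem welfare_mixed_NAI (b ca m : ℝ)
    (hb : b > 2 * ca) (hm : m > b - 2 * ca) (hpos : 0 < b - 2 * ca)
    (hca : 0 < ca)
    (xAI xN a piN piAI S : ℝ)
    (hxAI : xAI = (b - 2 * ca) / m)
    (hxN : xN = 1 - xAI)
    (ha : a = b - m * xAI)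
    (hpiN : piN = (a / 2) * xAI)
    (hpiAI : piAI = -ca + (a / 2) * xN + a * xAI)
    (hS : S = xN * piN + xAI * piAI) :
    S = (b - 2 * ca) * ca / m ∧ S > 0 ∧ S - 0 > 0 := by
  have hm0 : 0 < m := lt_trans hpos hm
  have hSval : S = (b - 2 * ca) * ca / m := by
    subst hS hpiN hpiAI hxN ha hxAI
    field_simp
    ring
  have hpos2 : 0 < (b - 2 * ca) * ca / m := by positivity
  exact ⟨hSval, by rw [hSval]; exact hpos2, by rw [hSval]; linarith⟩
end

section
/- Under the assumptions 0 < 2(c_h−c_a) < m, the socially optimal fraction of human work along the H–AI edge, x_H^SO = (c_a − c_h + 2m)/(2m), strictly exceeds the equilibrium fraction of human work at the mixed H–AI equilibrium, x_H* = (2c_a − 2c_h + m)/m. That is, the evolutionary equilibrium features strictly less human work than the social optimum. -/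
/-- Under 0 < 2(c_h−c_a) < m, the socially optimal fraction
of human work x_H^SO = (c_a − c_h + 2m)/(2m) strictly exceeds the
equilibrium fraction x_H* = (2c_a − 2c_h + m)/m: the evolutionary
equilibrium features strictly less human work than the social optimum. -/
theorem social_optimum_exceeds_equilibrium (ca ch m : ℝ)
    (hpos : 0 < 2 * (ch - ca)) (hm : 2 * (ch - ca) < m)
    (hca : 0 < ca)
    (xSO xstar : ℝ)
    (hxSO : xSO = (ca - ch + 2 * m) / (2 * m))
    (hxstar : xstar = (2 * ca - 2 * ch + m) / m) :
    xSO > xstar := by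
  have hm0 : 0 < m := lt_trans hpos hm
  rw [hxSO, hxstar, gt_iff_lt, div_lt_div_iff₀ hm0 (by linarith)]
  nlinarith
end

section
/- In the two-task model with strong habit formation, the combined payoff matrix t·Π₁ + (1−t)·Π₂ (with parameters b, c_a, m shared and human costs c_{h1}, c_{h2}) admits a mixed H–AI equilibrium with x_H(t) = (2c_a + m + 2c_{h2}(t−1) − 2c_{h1}t)/m and x_N = 0; this x_H(t) is strictly positive if and only if t < t_l, where t_l = (c_a − c_{h2} + m/2)/(c_{h1} − c_{h2}), assuming c_{h1} > c_{h2} and m > 0. -/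
/-- In the two-task model with strong habit formation, the
combined payoff matrix t·Π₁ + (1−t)·Π₂ (shared b, c_a, m; human costs
c_{h1}, c_{h2}) admits a mixed H–AI equilibrium with
x_H(t) = (2c_a + m + 2c_{h2}(t−1) − 2c_{h1}t)/m and x_N = 0 (payoffs of H
and AI are equal there); this x_H(t) is strictly positive iff t < t_l with
t_l = (c_a − c_{h2} + m/2)/(c_{h1} − c_{h2}), assuming c_{h1} > c_{h2} and
m > 0. -/
theorem two_task_mixed_HAI (b ca ch1 ch2 m t : ℝ)
    (hch : ch1 > ch2) (hm : 0 < m)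
    (xH xAI a tl piH piAI : ℝ)
    (hxH : xH = (2 * ca + m + 2 * ch2 * (t - 1) - 2 * ch1 * t) / m)
    (hxAI : xAI = 1 - xH)
    (ha : a = b - m * xAI)
    (htl : tl = (ca - ch2 + m / 2) / (ch1 - ch2))
    (hpiH : piH = t * (-ch1 + b * xH + ((b + a) / 2) * xAI)
      + (1 - t) * (-ch2 + b * xH + ((b + a) / 2) * xAI))
    (hpiAI : piAI = t * (-ca + ((b + a) / 2) * xH + a * xAI)
      + (1 - t) * (-ca + ((b + a) / 2) * xH + a * xAI)) :
    piH = piAI ∧ (0 < xH ↔ t < tl) := by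
  have hm' : m ≠ 0 := ne_of_gt hm
  have hc : 0 < ch1 - ch2 := sub_pos.mpr hch
  constructor
  · subst hxAI ha hpiH hpiAI hxH
    field_simp
    ring
  · rw [hxH, htl, lt_div_iff₀ hc, div_pos_iff]
    constructor
    · rintro (⟨h1, _⟩ | ⟨_, h2⟩)
      · nlinarith
      · nlinarith
    · intro h
      left
      constructor <;> nlinarith
end
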